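/- Let H be a Hopf algebra over a field k with antipode S, and A a left H-module algebra that is S²(H)-semiprime and satisfies ACC on right annihilators. Then rann_A(I) = 0 for every right ideal I ∈ E'_H. -/

import Mathlib

open TensorProduct

def IsModuleAlgebra (k : Type*) [Field k] {H A : Type*} [Ring H] [HopfAlgebra k H]
    [Ring A] [Algebra k A] (act : H →ₗ[k] A →ₗ[k] A) : Prop :=
  (∀ g h : H, act (g * h) = (act g) ∘ₗ (act h)) ∧
  (act 1 = LinearMap.id) ∧
  (∀ (h : H) (a b : A),
    act h (a * b) =
      LinearMap.mul' k A ((TensorProduct.map (act.flip a) (act.flip b))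
        (Coalgebra.comul h))) ∧
  (∀ h : H, act h 1 = Coalgebra.counit (R := k) h • (1 : A))

/-- A subset of a ring `A` is a right ideal. -/
def IsRightIdeal {A : Type*} [Ring A] (I : Set A) : Prop :=
  (0 : A) ∈ I ∧ (∀ x ∈ I, ∀ y ∈ I, x + y ∈ I) ∧ (∀ x ∈ I, ∀ a : A, x * a ∈ I)

/-- An essential right ideal: a right ideal meeting every nonzero right ideal nontrivially. -/
def IsEssentialRightIdeal {A : Type*} [Ring A] (I : Set A) : Prop :=
  IsRightIdeal I ∧
    ∀ J : Set A, IsRightIdeal J → (∃ y ∈ J, y ≠ 0) → ∃ x ∈ I, x ∈ J ∧ x ≠ 0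

/-- The filter `E'_H`: right ideals `I` of `A` such that for each `h ∈ S(H)` there is an
essential right ideal `J` of `A` with `h ⊳ J ⊆ I`. -/
def MemEH (k : Type*) [Field k] {H A : Type*} [Ring H] [HopfAlgebra k H]
    [Ring A] [Algebra k A] (act : H →ₗ[k] A →ₗ[k] A) (I : Set A) : Prop :=
  IsRightIdeal I ∧
    ∀ h : H, (∃ g : H, HopfAlgebra.antipode (R := k) g = h) →
      ∃ J : Set A, IsEssentialRightIdeal J ∧ ∀ x ∈ J, act h x ∈ I

/-- A subset of a ring is a two-sided ideal. -/
def IsTwoSidedIdealSet {A : Type*} [Ring A] (T : Set A) : Prop :=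
  (0 : A) ∈ T ∧ (∀ x ∈ T, ∀ y ∈ T, x + y ∈ T) ∧ (∀ x ∈ T, -x ∈ T) ∧
    (∀ x ∈ T, ∀ a : A, x * a ∈ T ∧ a * x ∈ T)

/-- A subset is nilpotent: all products of `n` of its elements vanish, for some `n > 0`. -/
def IsNilpotentSet {A : Type*} [Ring A] (T : Set A) : Prop :=
  ∃ n : ℕ, 0 < n ∧ ∀ f : Fin n → A, (∀ i, f i ∈ T) → (List.ofFn f).prod = 0

/-- `A` is `S²(H)`-semiprime: no nonzero nilpotent `S²(H)`-stable two-sided ideals. -/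
def IsS2Semiprime (k : Type*) [Field k] {H A : Type*} [Ring H] [HopfAlgebra k H]
    [Ring A] [Algebra k A] (act : H →ₗ[k] A →ₗ[k] A) : Prop :=
  ∀ T : Set A, IsTwoSidedIdealSet T →
    (∀ h : H, ∀ t ∈ T,
      act (HopfAlgebra.antipode (R := k) (HopfAlgebra.antipode (R := k) h)) t ∈ T) →
    IsNilpotentSet T → T = {0}

/-- `A` satisfies the ascending chain condition on right annihilators. -/
def ACCRightAnnihilators (A : Type*) [Ring A] : Prop :=
  ∀ f : ℕ → Set A,
    (∀ n, ∃ X : Set A, f n = {a : A | ∀ x ∈ X, x * a = 0}) →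
    (∀ n, f n ⊆ f (n + 1)) → ∃ N, ∀ n, N ≤ n → f n = f N

open Coalgebra


section Conv
variable {k : Type*} [CommSemiring k] {C : Type*} [AddCommMonoid C] [Module k C] [Coalgebra k C]
  {L : Type*} [AddCommMonoid L] [Module k L]

noncomputable def conv (m : L →ₗ[k] L →ₗ[k] L) (f g : C →ₗ[k] L) : C →ₗ[k] L :=
  (TensorProduct.lift ((m ∘ₗ f).compl₂ g)) ∘ₗ Coalgebra.comul

lemma conv_repr (m : L →ₗ[k] L →ₗ[k] L) (f g : C →ₗ[k] L) (c : C) {ι : Type*} (r : Coalgebra.Repr k c ι) :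
    conv m f g c = ∑ i ∈ r.index, m (f (r.left i)) (g (r.right i)) := by
  simp only [conv, LinearMap.comp_apply, ← r.eq, map_sum, TensorProduct.lift.tmul,
    LinearMap.compl₂_apply]

noncomputable def cunit (e : L) : C →ₗ[k] L := (Coalgebra.counit (R := k)).smulRight e

lemma cunit_apply (e : L) (c : C) : (cunit (k := k) e) c = Coalgebra.counit (R := k) c • e := rfl

lemma repr_counit_smul_right {c : C} {ι : Type*} (r : Coalgebra.Repr k c ι) :
    ∑ i ∈ r.index, Coalgebra.counit (R := k) (r.left i) • r.right i = c := by
  calc ∑ i ∈ r.index, Coalgebra.counit (R := k) (r.left i) • r.right i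
      = TensorProduct.lid k C (∑ i ∈ r.index,
          Coalgebra.counit (R := k) (r.left i) ⊗ₜ[k] r.right i) := by
        rw [map_sum]; simp
    _ = TensorProduct.lid k C ((1 : k) ⊗ₜ[k] c) := by rw [Coalgebra.sum_counit_tmul_eq]
    _ = c := by simp

lemma repr_counit_smul_left {c : C} {ι : Type*} (r : Coalgebra.Repr k c ι) :
    ∑ i ∈ r.index, Coalgebra.counit (R := k) (r.right i) • r.left i = c := by
  calc ∑ i ∈ r.index, Coalgebra.counit (R := k) (r.right i) • r.left i
      = TensorProduct.rid k C (∑ i ∈ r.index,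
          r.left i ⊗ₜ[k] Coalgebra.counit (R := k) (r.right i)) := by
        rw [map_sum]; simp [TensorProduct.rid_tmul]
    _ = TensorProduct.rid k C (c ⊗ₜ[k] (1 : k)) := by rw [Coalgebra.sum_tmul_counit_eq]
    _ = c := by simp

variable (m : L →ₗ[k] L →ₗ[k] L)

lemma conv_cunit_left (e : L) (he : ∀ x : L, m e x = x) (f : C →ₗ[k] L) :
    conv m (cunit e) f = f := by
  ext c
  rw [conv_repr m _ f c (ℛ k c)]
  calc ∑ i ∈ (ℛ k c).index, m ((cunit e) ((ℛ k c).left i)) (f ((ℛ k c).right i))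
      = ∑ i ∈ (ℛ k c).index,
          Coalgebra.counit (R := k) ((ℛ k c).left i) • f ((ℛ k c).right i) := by
        refine Finset.sum_congr rfl fun i _ => ?_
        rw [cunit_apply, map_smul, LinearMap.smul_apply, he]
    _ = f (∑ i ∈ (ℛ k c).index,
          Coalgebra.counit (R := k) ((ℛ k c).left i) • (ℛ k c).right i) := by
        rw [map_sum]; simp
    _ = f c := by rw [repr_counit_smul_right]

lemma conv_cunit_right (e : L) (he : ∀ x : L, m x e = x) (f : C →ₗ[k] L) :
    conv m f (cunit e) = f := by
  ext c
  rw [conv_repr m f _ c (ℛ k c)]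
  calc ∑ i ∈ (ℛ k c).index, m (f ((ℛ k c).left i)) ((cunit e) ((ℛ k c).right i))
      = ∑ i ∈ (ℛ k c).index,
          Coalgebra.counit (R := k) ((ℛ k c).right i) • f ((ℛ k c).left i) := by
        refine Finset.sum_congr rfl fun i _ => ?_
        rw [cunit_apply, map_smul, he]
    _ = f (∑ i ∈ (ℛ k c).index,
          Coalgebra.counit (R := k) ((ℛ k c).right i) • (ℛ k c).left i) := by
        rw [map_sum]; simp
    _ = f c := by rw [repr_counit_smul_left]

lemma conv_assoc (hm : ∀ x y z : L, m (m x y) z = m x (m y z)) (f g h : C →ₗ[k] L) :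
    conv m (conv m f g) h = conv m f (conv m g h) := by
  ext c
  set r := ℛ k c
  set a₁ : (i : r.ι) → Coalgebra.Repr k (r.left i) (C × C) := fun i => ℛ k (r.left i)
  set a₂ : (i : r.ι) → Coalgebra.Repr k (r.right i) (C × C) := fun i => ℛ k (r.right i)
  have key := Coalgebra.sum_map_tmul_tmul_eq (R := k) f g h c (repr := r) (a₁ := a₁) (a₂ := a₂)
  let Θ : L ⊗[k] (L ⊗[k] L) →ₗ[k] L :=
    TensorProduct.lift ((LinearMap.llcomp k (L ⊗[k] L) L L).flip (TensorProduct.lift m) ∘ₗ m)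
  have hΘ : ∀ (p q s : L), Θ (p ⊗ₜ[k] (q ⊗ₜ[k] s)) = m p (m q s) := by
    intro p q s
    simp [Θ, TensorProduct.lift.tmul]
  have key2 := congrArg Θ key
  rw [map_sum, map_sum] at key2
  simp only [map_sum, hΘ] at key2
  calc (conv m (conv m f g) h) c
      = ∑ i ∈ r.index, m ((conv m f g) (r.left i)) (h (r.right i)) := conv_repr ..
    _ = ∑ i ∈ r.index, ∑ j ∈ (a₁ i).index,
          m (m (f ((a₁ i).left j)) (g ((a₁ i).right j))) (h (r.right i)) := by
        refine Finset.sum_congr rfl fun i _ => ?_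
        rw [conv_repr m f g _ (a₁ i)]
        rw [map_sum, LinearMap.sum_apply]
    _ = ∑ i ∈ r.index, ∑ j ∈ (a₁ i).index,
          m (f ((a₁ i).left j)) (m (g ((a₁ i).right j)) (h (r.right i))) := by
        simp only [hm]
    _ = ∑ i ∈ r.index, ∑ j ∈ (a₂ i).index,
          m (f (r.left i)) (m (g ((a₂ i).left j)) (h ((a₂ i).right j))) := key2.symm
    _ = ∑ i ∈ r.index, m (f (r.left i)) ((conv m g h) (r.right i)) := by
        refine Finset.sum_congr rfl fun i _ => ?_
        rw [conv_repr m g h _ (a₂ i), map_sum]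
    _ = (conv m f (conv m g h)) c := (conv_repr ..).symm

lemma conv_add_left (f f' g : C →ₗ[k] L) :
    conv m (f + f') g = conv m f g + conv m f' g := by
  ext c
  simp only [LinearMap.add_apply, conv_repr m _ g c (ℛ k c), ← Finset.sum_add_distrib]
  simp
lemma conv_add_right (f g g' : C →ₗ[k] L) :
    conv m f (g + g') = conv m f g + conv m f g' := by
  ext c
  simp only [LinearMap.add_apply, conv_repr m _ _ c (ℛ k c), ← Finset.sum_add_distrib]
  simp
lemma conv_smul_left (t : k) (f g : C →ₗ[k] L) :
    conv m (t • f) g = t • conv m f g := by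
  ext c
  simp only [LinearMap.smul_apply, conv_repr m _ g c (ℛ k c), Finset.smul_sum]
  simp
lemma conv_smul_right (t : k) (f g : C →ₗ[k] L) :
    conv m f (t • g) = t • conv m f g := by
  ext c
  simp only [LinearMap.smul_apply, conv_repr m _ _ c (ℛ k c), Finset.smul_sum]
  simp

end Conv

section Hopf
variable {k H : Type*} [CommSemiring k] [Semiring H] [HopfAlgebra k H]

local notation "S" => HopfAlgebra.antipode (R := k) (A := H)

/-- A representation of `comul 1`. -/
noncomputable def oneRepr : Coalgebra.Repr k (1 : H) Unit where
  index := {()}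
  left := fun _ => 1
  right := fun _ => 1
  eq := by simp [Bialgebra.comul_one, Algebra.TensorProduct.one_def]

lemma my_antipode_one : S (1 : H) = 1 := by
  have h := HopfAlgebra.sum_antipode_mul_eq_algebraMap_counit (R := k) (oneRepr (k := k) (H := H))
  simpa [oneRepr] using h

/-- A representation of `comul (a * b)` from ones of `a` and `b`. -/
noncomputable def mulRepr {a b : H} {ι ι' : Type*} (r : Coalgebra.Repr k a ι) (r' : Coalgebra.Repr k b ι') :
    Coalgebra.Repr k (a * b) (ι × ι') where
  index := r.index ×ˢ r'.index
  left := fun p => r.left p.1 * r'.left p.2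
  right := fun p => r.right p.1 * r'.right p.2
  eq := by
    rw [Bialgebra.comul_mul, ← r.eq, ← r'.eq, Finset.sum_mul_sum]
    rw [Finset.sum_product]
    simp [Algebra.TensorProduct.tmul_mul_tmul]

end Hopf

section Hopf2
variable {k H : Type*} [CommSemiring k] [Semiring H] [HopfAlgebra k H]

local notation "S" => HopfAlgebra.antipode (R := k) (A := H)

/-- Convolution product on `H →ₗ[k] H` as a bilinear map. -/
noncomputable def convH : (H →ₗ[k] H) →ₗ[k] (H →ₗ[k] H) →ₗ[k] (H →ₗ[k] H) :=
  LinearMap.mk₂ k (conv (LinearMap.mul k H)) (conv_add_left _) (conv_smul_left _)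
    (conv_add_right _) (conv_smul_right _)

@[simp] lemma convH_apply (f g : H →ₗ[k] H) :
    convH f g = conv (LinearMap.mul k H) f g := rfl

/-- `(a, b) ↦ S (a * b)` as a bilinear map. -/
noncomputable def Umap : H →ₗ[k] H →ₗ[k] H :=
  LinearMap.mk₂ k (fun a b => S (a * b))
    (fun a a' b => by simp [add_mul]) (fun c a b => by simp [smul_mul_assoc])
    (fun a b b' => by simp [mul_add]) (fun c a b => by simp [mul_smul_comm])

@[simp] lemma Umap_apply (a b : H) : Umap (k := k) a b = S (a * b) := rfl

/-- `(a, b) ↦ S b * S a` as a bilinear map. -/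
noncomputable def Vmap : H →ₗ[k] H →ₗ[k] H :=
  LinearMap.mk₂ k (fun a b => S b * S a)
    (fun a a' b => by simp [mul_add]) (fun c a b => by simp [mul_smul_comm])
    (fun a b b' => by simp [add_mul]) (fun c a b => by simp [smul_mul_assoc])

@[simp] lemma Vmap_apply (a b : H) : Vmap (k := k) a b = S b * S a := rfl

lemma my_antipode_mul (a b : H) : S (a * b) = S b * S a := by
  have hm : ∀ x y z : H, LinearMap.mul k H (LinearMap.mul k H x y) z
      = LinearMap.mul k H x (LinearMap.mul k H y z) := fun x y z => by simp [mul_assoc]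
  have he1 : ∀ x : H, LinearMap.mul k H 1 x = x := fun x => by simp
  have he2 : ∀ x : H, LinearMap.mul k H x 1 = x := fun x => by simp
  have hm₂ : ∀ x y z : H →ₗ[k] H, convH (convH x y) z = convH x (convH y z) := by
    intro x y z; simp only [convH_apply]; exact conv_assoc _ hm x y z
  have he₂1 : ∀ f : H →ₗ[k] H, convH (cunit (k := k) (C := H) (1 : H)) f = f := by
    intro f; simp only [convH_apply]; exact conv_cunit_left _ 1 he1 f
  have he₂2 : ∀ f : H →ₗ[k] H, convH f (cunit (k := k) (C := H) (1 : H)) = f := by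
    intro f; simp only [convH_apply]; exact conv_cunit_right _ 1 he2 f
  have C1 : conv convH Umap (LinearMap.mul k H)
      = cunit (cunit (k := k) (C := H) (1 : H)) := by
    apply LinearMap.ext; intro x; apply LinearMap.ext; intro y
    have lhs : (conv convH Umap (LinearMap.mul k H)) x y
        = ∑ i ∈ (ℛ k x).index, ∑ j ∈ (ℛ k y).index,
            S ((ℛ k x).left i * (ℛ k y).left j) * ((ℛ k x).right i * (ℛ k y).right j) := by
      rw [conv_repr convH Umap (LinearMap.mul k H) x (ℛ k x), LinearMap.sum_apply]
      refine Finset.sum_congr rfl fun i _ => ?_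
      rw [convH_apply, conv_repr (LinearMap.mul k H) _ _ y (ℛ k y)]
      rfl
    have h := HopfAlgebra.sum_antipode_mul_eq_smul (R := k) (mulRepr (ℛ k x) (ℛ k y))
    have h' : ∑ p ∈ (ℛ k x).index ×ˢ (ℛ k y).index,
        S ((ℛ k x).left p.1 * (ℛ k y).left p.2)
          * ((ℛ k x).right p.1 * (ℛ k y).right p.2)
        = Coalgebra.counit (R := k) (x * y) • (1 : H) := h
    rw [Finset.sum_product] at h'
    rw [lhs, h', cunit_apply, LinearMap.smul_apply, cunit_apply, Bialgebra.counit_mul,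
      mul_smul]
  have C2 : conv convH (LinearMap.mul k H) Vmap
      = cunit (cunit (k := k) (C := H) (1 : H)) := by
    apply LinearMap.ext; intro x; apply LinearMap.ext; intro y
    have lhs : (conv convH (LinearMap.mul k H) Vmap) x y
        = ∑ i ∈ (ℛ k x).index, ∑ j ∈ (ℛ k y).index,
            ((ℛ k x).left i * (ℛ k y).left j)
              * (S ((ℛ k y).right j) * S ((ℛ k x).right i)) := by
      rw [conv_repr convH (LinearMap.mul k H) Vmap x (ℛ k x), LinearMap.sum_apply]
      refine Finset.sum_congr rfl fun i _ => ?_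
      rw [convH_apply, conv_repr (LinearMap.mul k H) _ _ y (ℛ k y)]
      rfl
    rw [lhs]
    have step : ∀ i ∈ (ℛ k x).index, ∑ j ∈ (ℛ k y).index,
        ((ℛ k x).left i * (ℛ k y).left j) * (S ((ℛ k y).right j) * S ((ℛ k x).right i))
        = Coalgebra.counit (R := k) y • ((ℛ k x).left i * S ((ℛ k x).right i)) := by
      intro i _
      calc ∑ j ∈ (ℛ k y).index,
            ((ℛ k x).left i * (ℛ k y).left j) * (S ((ℛ k y).right j) * S ((ℛ k x).right i))
          = ∑ j ∈ (ℛ k y).index,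
            (ℛ k x).left i * (((ℛ k y).left j * S ((ℛ k y).right j)) * S ((ℛ k x).right i)) := by
            refine Finset.sum_congr rfl fun j _ => ?_; simp [mul_assoc]
        _ = (ℛ k x).left i * ((∑ j ∈ (ℛ k y).index,
              (ℛ k y).left j * S ((ℛ k y).right j)) * S ((ℛ k x).right i)) := by
            rw [Finset.sum_mul, Finset.mul_sum]
        _ = Coalgebra.counit (R := k) y • ((ℛ k x).left i * S ((ℛ k x).right i)) := by
            rw [HopfAlgebra.sum_mul_antipode_eq_smul (R := k) (ℛ k y), smul_mul_assoc, one_mul,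
              mul_smul_comm]
    rw [Finset.sum_congr rfl step, ← Finset.smul_sum,
      HopfAlgebra.sum_mul_antipode_eq_smul (R := k) (ℛ k x)]
    rw [cunit_apply, LinearMap.smul_apply, cunit_apply]
    rw [smul_comm]
  have main : Umap (k := k) (H := H) = Vmap := by
    calc Umap (k := k) (H := H)
        = conv convH Umap (cunit (cunit (k := k) (C := H) (1 : H))) :=
          (conv_cunit_right convH _ he₂2 Umap).symm
      _ = conv convH Umap (conv convH (LinearMap.mul k H) Vmap) := by rw [C2]
      _ = conv convH (conv convH Umap (LinearMap.mul k H)) Vmap :=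
          (conv_assoc convH hm₂ Umap (LinearMap.mul k H) Vmap).symm
      _ = conv convH (cunit (cunit (k := k) (C := H) (1 : H))) Vmap := by rw [C1]
      _ = Vmap := conv_cunit_left convH _ he₂1 Vmap
  have := LinearMap.congr_fun (LinearMap.congr_fun main a) b
  simpa using this

end Hopf2

section Hopf3
variable {k H : Type*} [CommSemiring k] [Semiring H] [HopfAlgebra k H]

local notation "S" => HopfAlgebra.antipode (R := k) (A := H)

lemma my_comul_antipode {a : H} {ι : Type*} (r : Coalgebra.Repr k a ι) :
    Coalgebra.comul (R := k) (S a)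
      = ∑ i ∈ r.index, S (r.right i) ⊗ₜ[k] S (r.left i) := by
  set m : (H ⊗[k] H) →ₗ[k] (H ⊗[k] H) →ₗ[k] (H ⊗[k] H) := LinearMap.mul k (H ⊗[k] H) with hmdef
  have hm : ∀ x y z : H ⊗[k] H, m (m x y) z = m x (m y z) := fun x y z => by
    simp [hmdef, mul_assoc]
  have he1 : ∀ x : H ⊗[k] H, m 1 x = x := fun x => by simp [hmdef]
  have he2 : ∀ x : H ⊗[k] H, m x 1 = x := fun x => by simp [hmdef]
  set D : H →ₗ[k] H ⊗[k] H := Coalgebra.comul (R := k) with hDdef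
  set DS : H →ₗ[k] H ⊗[k] H := D ∘ₗ S with hDSdef
  set u : H →ₗ[k] H ⊗[k] H :=
    (TensorProduct.comm k H H).toLinearMap ∘ₗ (TensorProduct.map S S) ∘ₗ D with hudef
  set i1 : H →ₗ[k] H ⊗[k] H := (TensorProduct.mk k H H).flip 1 with hi1def
  set i2 : H →ₗ[k] H ⊗[k] H := TensorProduct.mk k H H 1 with hi2def
  have hA : conv m D DS = cunit (1 : H ⊗[k] H) := by
    ext c
    rw [conv_repr m D DS c (ℛ k c), cunit_apply]
    calc ∑ i ∈ (ℛ k c).index, m (D ((ℛ k c).left i)) (DS ((ℛ k c).right i))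
        = D (∑ i ∈ (ℛ k c).index, (ℛ k c).left i * S ((ℛ k c).right i)) := by
          rw [map_sum]
          refine Finset.sum_congr rfl fun i _ => ?_
          simp [hmdef, hDSdef, hDdef, Bialgebra.comul_mul]
      _ = Coalgebra.counit (R := k) c • (1 : H ⊗[k] H) := by
          rw [HopfAlgebra.sum_mul_antipode_eq_smul (R := k) (ℛ k c), map_smul]
          simp [hDdef, Bialgebra.comul_one]
  have hB : conv m DS D = cunit (1 : H ⊗[k] H) := by
    ext c
    rw [conv_repr m DS D c (ℛ k c), cunit_apply]
    calc ∑ i ∈ (ℛ k c).index, m (DS ((ℛ k c).left i)) (D ((ℛ k c).right i))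
        = D (∑ i ∈ (ℛ k c).index, S ((ℛ k c).left i) * (ℛ k c).right i) := by
          rw [map_sum]
          refine Finset.sum_congr rfl fun i _ => ?_
          simp [hmdef, hDSdef, hDdef, Bialgebra.comul_mul]
      _ = Coalgebra.counit (R := k) c • (1 : H ⊗[k] H) := by
          rw [HopfAlgebra.sum_antipode_mul_eq_smul (R := k) (ℛ k c), map_smul]
          simp [hDdef, Bialgebra.comul_one]
  have hD : D = conv m i1 i2 := by
    ext c
    rw [conv_repr m i1 i2 c (ℛ k c)]
    calc D c = ∑ i ∈ (ℛ k c).index, (ℛ k c).left i ⊗ₜ[k] (ℛ k c).right i := by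
          rw [hDdef, ← (ℛ k c).eq]
      _ = ∑ i ∈ (ℛ k c).index, m (i1 ((ℛ k c).left i)) (i2 ((ℛ k c).right i)) := by
          refine Finset.sum_congr rfl fun i _ => ?_
          simp [hmdef, hi1def, hi2def, Algebra.TensorProduct.tmul_mul_tmul]
  have hu : u = conv m (i2 ∘ₗ S) (i1 ∘ₗ S) := by
    ext c
    rw [conv_repr m _ _ c (ℛ k c)]
    calc u c = ∑ i ∈ (ℛ k c).index, S ((ℛ k c).right i) ⊗ₜ[k] S ((ℛ k c).left i) := by
          rw [hudef]
          simp only [LinearMap.comp_apply, hDdef, ← (ℛ k c).eq, map_sum]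
          simp
      _ = ∑ i ∈ (ℛ k c).index, m ((i2 ∘ₗ S) ((ℛ k c).left i)) ((i1 ∘ₗ S) ((ℛ k c).right i)) := by
          refine Finset.sum_congr rfl fun i _ => ?_
          simp [hmdef, hi1def, hi2def, Algebra.TensorProduct.tmul_mul_tmul]
  have h5 : conv m i2 (i2 ∘ₗ S) = cunit (1 : H ⊗[k] H) := by
    ext c
    rw [conv_repr m _ _ c (ℛ k c), cunit_apply]
    calc ∑ i ∈ (ℛ k c).index, m (i2 ((ℛ k c).left i)) ((i2 ∘ₗ S) ((ℛ k c).right i))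
        = (1 : H) ⊗ₜ[k] (∑ i ∈ (ℛ k c).index, (ℛ k c).left i * S ((ℛ k c).right i)) := by
          rw [TensorProduct.tmul_sum]
          refine Finset.sum_congr rfl fun i _ => ?_
          simp [hmdef, hi2def, Algebra.TensorProduct.tmul_mul_tmul]
      _ = Coalgebra.counit (R := k) c • (1 : H ⊗[k] H) := by
          rw [HopfAlgebra.sum_mul_antipode_eq_smul (R := k) (ℛ k c), TensorProduct.tmul_smul,
            Algebra.TensorProduct.one_def]
  have h6 : conv m i1 (i1 ∘ₗ S) = cunit (1 : H ⊗[k] H) := by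
    ext c
    rw [conv_repr m _ _ c (ℛ k c), cunit_apply]
    calc ∑ i ∈ (ℛ k c).index, m (i1 ((ℛ k c).left i)) ((i1 ∘ₗ S) ((ℛ k c).right i))
        = (∑ i ∈ (ℛ k c).index, (ℛ k c).left i * S ((ℛ k c).right i)) ⊗ₜ[k] (1 : H) := by
          rw [TensorProduct.sum_tmul]
          refine Finset.sum_congr rfl fun i _ => ?_
          simp [hmdef, hi1def, Algebra.TensorProduct.tmul_mul_tmul]
      _ = Coalgebra.counit (R := k) c • (1 : H ⊗[k] H) := by
          rw [HopfAlgebra.sum_mul_antipode_eq_smul (R := k) (ℛ k c)]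
          rw [← TensorProduct.smul_tmul', Algebra.TensorProduct.one_def]
  have DU : conv m D u = cunit (1 : H ⊗[k] H) := by
    calc conv m D u = conv m (conv m i1 i2) (conv m (i2 ∘ₗ S) (i1 ∘ₗ S)) := by rw [← hD, ← hu]
      _ = conv m i1 (conv m i2 (conv m (i2 ∘ₗ S) (i1 ∘ₗ S))) := conv_assoc m hm ..
      _ = conv m i1 (conv m (conv m i2 (i2 ∘ₗ S)) (i1 ∘ₗ S)) := by
          rw [conv_assoc m hm i2 (i2 ∘ₗ S) (i1 ∘ₗ S)]
      _ = conv m i1 (conv m (cunit (1 : H ⊗[k] H)) (i1 ∘ₗ S)) := by rw [h5]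
      _ = conv m i1 (i1 ∘ₗ S) := by rw [conv_cunit_left m _ he1]
      _ = cunit (1 : H ⊗[k] H) := h6
  have main : DS = u := by
    calc DS = conv m DS (cunit (1 : H ⊗[k] H)) := (conv_cunit_right m _ he2 DS).symm
      _ = conv m DS (conv m D u) := by rw [DU]
      _ = conv m (conv m DS D) u := (conv_assoc m hm ..).symm
      _ = conv m (cunit (1 : H ⊗[k] H)) u := by rw [hB]
      _ = u := conv_cunit_left m _ he1 u
  have := LinearMap.congr_fun main a
  rw [hDSdef, hudef] at this
  simp only [LinearMap.comp_apply, hDdef] at this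
  rw [this, ← r.eq, map_sum]
  simp
end Hopf3

section Reprs
variable {k H : Type*} [CommSemiring k] [Semiring H] [HopfAlgebra k H]

local notation "S" => HopfAlgebra.antipode (R := k) (A := H)

/-- Representation of `comul (S a)` obtained from one of `comul a`. -/
noncomputable def Coalgebra.Repr.anti {a : H} {ι : Type*} (r : Coalgebra.Repr k a ι) :
    Coalgebra.Repr k (S a) ι where
  index := r.index
  left := fun i => S (r.right i)
  right := fun i => S (r.left i)
  eq := (my_comul_antipode r).symm

lemma antipode_sq_mul (p q : H) : S (S (p * q)) = S (S p) * S (S q) := by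
  rw [my_antipode_mul, my_antipode_mul]

end Reprs

section MA
variable {k H A : Type*} [Field k] [Ring H] [HopfAlgebra k H] [Ring A] [Algebra k A]
  {act : H →ₗ[k] A →ₗ[k] A} (hact : IsModuleAlgebra k act)

local notation "S" => HopfAlgebra.antipode (R := k) (A := H)

include hact

lemma act_mul_apply (g h : H) (a : A) : act (g * h) a = act g (act h a) := by
  rw [hact.1]; rfl

lemma act_one_apply (a : A) : act 1 a = a := by rw [hact.2.1]; rfl

lemma act_smul_one_apply (c : k) (a : A) : act (c • (1 : H)) a = c • a := by
  rw [map_smul, LinearMap.smul_apply, act_one_apply hact]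

lemma ma_repr (h : H) (a b : A) {ι : Type*} (r : Coalgebra.Repr k h ι) :
    act h (a * b) = ∑ i ∈ r.index, act (r.left i) a * act (r.right i) b := by
  rw [hact.2.2.1 h a b, ← r.eq, map_sum, map_sum]
  refine Finset.sum_congr rfl fun i _ => ?_
  simp

/-- Identity (A):  `(h ⊳ u) * v = ∑ h₁ ⊳ (u * (S h₂ ⊳ v))`. -/
lemma act_mul_right (h : H) (u v : A) {ι : Type*} (r : Coalgebra.Repr k h ι) :
    act h u * v = ∑ i ∈ r.index, act (r.left i) (u * act (S (r.right i)) v) := by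
  classical
  set a₁ : (i : r.ι) → Coalgebra.Repr k (r.left i) (H × H) := fun i => ℛ k (r.left i) with ha₁
  set a₂ : (i : r.ι) → Coalgebra.Repr k (r.right i) (H × H) := fun i => ℛ k (r.right i) with ha₂
  have key := Coalgebra.sum_tmul_tmul_eq (R := k) r a₁ a₂
  set Θ : H ⊗[k] (H ⊗[k] H) →ₗ[k] A :=
    (LinearMap.mul' k A) ∘ₗ
      (TensorProduct.map (act.flip u)
        ((act.flip v) ∘ₗ (LinearMap.mul' k H) ∘ₗ
          (LinearMap.lTensor H (HopfAlgebra.antipode (R := k))))) with hΘdef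
  have hΘ : ∀ p q z : H, Θ (p ⊗ₜ[k] (q ⊗ₜ[k] z)) = act p u * act (q * S z) v := by
    intro p q z; simp [hΘdef]
  have key2 := congrArg Θ key
  simp only [map_sum, hΘ] at key2
  calc act h u * v
      = (act (∑ i ∈ r.index, Coalgebra.counit (R := k) (r.right i) • r.left i)) u * v := by
        rw [repr_counit_smul_left r]
    _ = ∑ i ∈ r.index, Coalgebra.counit (R := k) (r.right i) • (act (r.left i) u * v) := by
        rw [map_sum, LinearMap.sum_apply, Finset.sum_mul]
        refine Finset.sum_congr rfl fun i _ => ?_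
        rw [map_smul, LinearMap.smul_apply, smul_mul_assoc]
    _ = ∑ i ∈ r.index, act (r.left i) u * act (Coalgebra.counit (R := k) (r.right i) • 1) v := by
        refine Finset.sum_congr rfl fun i _ => ?_
        rw [act_smul_one_apply hact, mul_smul_comm]
    _ = ∑ i ∈ r.index, act (r.left i) u
          * act (∑ j ∈ (a₂ i).index, (a₂ i).left j * S ((a₂ i).right j)) v := by
        refine Finset.sum_congr rfl fun i _ => ?_
        rw [HopfAlgebra.sum_mul_antipode_eq_smul (R := k) (a₂ i)]
    _ = ∑ i ∈ r.index, ∑ j ∈ (a₂ i).index,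
          act (r.left i) u * act ((a₂ i).left j * S ((a₂ i).right j)) v := by
        refine Finset.sum_congr rfl fun i _ => ?_
        rw [map_sum, LinearMap.sum_apply, Finset.mul_sum]
    _ = ∑ i ∈ r.index, ∑ j ∈ (a₁ i).index,
          act ((a₁ i).left j) u * act ((a₁ i).right j * S (r.right i)) v := key2.symm
    _ = ∑ i ∈ r.index, act (r.left i) (u * act (S (r.right i)) v) := by
        refine Finset.sum_congr rfl fun i _ => ?_
        rw [ma_repr hact (r.left i) u (act (S (r.right i)) v) (a₁ i)]
        refine Finset.sum_congr rfl fun j _ => ?_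
        rw [act_mul_apply hact]

/-- Identity (★):  `u * (S² g ⊳ v) = ∑ S² g₂ ⊳ ((S g₁ ⊳ u) * v)`. -/
lemma mul_act_sq (g : H) (u v : A) {ι : Type*} (r : Coalgebra.Repr k g ι) :
    u * act (S (S g)) v
      = ∑ i ∈ r.index, act (S (S (r.right i))) (act (S (r.left i)) u * v) := by
  classical
  set a₁ : (i : r.ι) → Coalgebra.Repr k (r.left i) (H × H) := fun i => ℛ k (r.left i) with ha₁
  set a₂ : (i : r.ι) → Coalgebra.Repr k (r.right i) (H × H) := fun i => ℛ k (r.right i) with ha₂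
  have key := Coalgebra.sum_tmul_tmul_eq (R := k) r a₁ a₂
  set M₂ : H ⊗[k] H →ₗ[k] A :=
    (act.flip u) ∘ₗ (HopfAlgebra.antipode (R := k)) ∘ₗ (LinearMap.mul' k H) ∘ₗ
      (LinearMap.lTensor H (HopfAlgebra.antipode (R := k))) with hM₂def
  set M₃ : H →ₗ[k] A :=
    (act.flip v) ∘ₗ (HopfAlgebra.antipode (R := k)) ∘ₗ (HopfAlgebra.antipode (R := k))
      with hM₃def
  set Θ : H ⊗[k] (H ⊗[k] H) →ₗ[k] A :=
    (LinearMap.mul' k A) ∘ₗ (TensorProduct.map M₂ M₃) ∘ₗ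
      (TensorProduct.assoc k H H H).symm.toLinearMap with hΘdef
  have hΘ : ∀ p q z : H,
      Θ (p ⊗ₜ[k] (q ⊗ₜ[k] z)) = act (S (p * S q)) u * act (S (S z)) v := by
    intro p q z; simp [hΘdef, hM₂def, hM₃def]
  have key2 := congrArg Θ key
  simp only [map_sum, hΘ] at key2
  calc u * act (S (S g)) v
      = u * act (S (S (∑ i ∈ r.index, Coalgebra.counit (R := k) (r.left i) • r.right i))) v := by
        rw [repr_counit_smul_right r]
    _ = ∑ i ∈ r.index, Coalgebra.counit (R := k) (r.left i)
          • (u * act (S (S (r.right i))) v) := by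
        rw [map_sum, map_sum, map_sum, LinearMap.sum_apply, Finset.mul_sum]
        refine Finset.sum_congr rfl fun i _ => ?_
        rw [map_smul, map_smul, map_smul, LinearMap.smul_apply, mul_smul_comm]
    _ = ∑ i ∈ r.index, act (S (Coalgebra.counit (R := k) (r.left i) • (1 : H))) u
          * act (S (S (r.right i))) v := by
        refine Finset.sum_congr rfl fun i _ => ?_
        rw [map_smul, my_antipode_one, act_smul_one_apply hact, smul_mul_assoc]
    _ = ∑ i ∈ r.index,
          act (S (∑ j ∈ (a₁ i).index, (a₁ i).left j * S ((a₁ i).right j))) u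
            * act (S (S (r.right i))) v := by
        refine Finset.sum_congr rfl fun i _ => ?_
        rw [HopfAlgebra.sum_mul_antipode_eq_smul (R := k) (a₁ i)]
    _ = ∑ i ∈ r.index, ∑ j ∈ (a₁ i).index,
          act (S ((a₁ i).left j * S ((a₁ i).right j))) u * act (S (S (r.right i))) v := by
        refine Finset.sum_congr rfl fun i _ => ?_
        rw [map_sum, map_sum, LinearMap.sum_apply, Finset.sum_mul]
    _ = ∑ i ∈ r.index, ∑ j ∈ (a₂ i).index,
          act (S (r.left i * S ((a₂ i).left j))) u * act (S (S ((a₂ i).right j))) v := key2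
    _ = ∑ i ∈ r.index, act (S (S (r.right i))) (act (S (r.left i)) u * v) := by
        refine Finset.sum_congr rfl fun i _ => ?_
        rw [ma_repr hact (S (S (r.right i))) (act (S (r.left i)) u) v ((a₂ i).anti.anti)]
        refine Finset.sum_congr rfl fun j _ => ?_
        show act (S (r.left i * S ((a₂ i).left j))) u * act (S (S ((a₂ i).right j))) v
          = act (S (S ((a₂ i).left j))) (act (S (r.left i)) u) * act (S (S ((a₂ i).right j))) v
        rw [← act_mul_apply hact, my_antipode_mul]

end MA

section RingAux
variable {A : Type*} [Ring A]

/-- right annihilator of a set -/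
def rann (X : Set A) : Set A := {a : A | ∀ x ∈ X, x * a = 0}

lemma rann_antitone {X Y : Set A} (h : X ⊆ Y) : rann Y ⊆ rann X :=
  fun _ ha x hx => ha x (h hx)

lemma isRightIdeal_univ : IsRightIdeal (Set.univ : Set A) :=
  ⟨trivial, fun _ _ _ _ => trivial, fun _ _ _ => trivial⟩

lemma essential_univ : IsEssentialRightIdeal (Set.univ : Set A) :=
  ⟨isRightIdeal_univ, fun _ _ ⟨y, hy, hy0⟩ => ⟨y, trivial, hy, hy0⟩⟩

lemma isRightIdeal_inter {I J : Set A} (hI : IsRightIdeal I) (hJ : IsRightIdeal J) :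
    IsRightIdeal (I ∩ J) :=
  ⟨⟨hI.1, hJ.1⟩, fun x hx y hy => ⟨hI.2.1 x hx.1 y hy.1, hJ.2.1 x hx.2 y hy.2⟩,
    fun x hx a => ⟨hI.2.2 x hx.1 a, hJ.2.2 x hx.2 a⟩⟩

lemma essential_inter {I J : Set A} (hI : IsEssentialRightIdeal I)
    (hJ : IsEssentialRightIdeal J) : IsEssentialRightIdeal (I ∩ J) := by
  refine ⟨isRightIdeal_inter hI.1 hJ.1, ?_⟩
  intro K hK hKne
  obtain ⟨x, hxI, hxK, hx0⟩ := hI.2 K hK hKne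
  obtain ⟨y, hyJ, hy, hy0⟩ := hJ.2 (I ∩ K) (isRightIdeal_inter hI.1 hK) ⟨x, ⟨hxI, hxK⟩, hx0⟩
  exact ⟨y, ⟨hy.1, hyJ⟩, hy.2, hy0⟩

lemma essential_superset {I J : Set A} (hI : IsEssentialRightIdeal I) (hIJ : I ⊆ J)
    (hJ : IsRightIdeal J) : IsEssentialRightIdeal J := by
  refine ⟨hJ, ?_⟩
  intro K hK hKne
  obtain ⟨x, hxI, hxK, hx0⟩ := hI.2 K hK hKne
  exact ⟨x, hIJ hxI, hxK, hx0⟩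

lemma essential_biInter {ι : Type*} (s : Finset ι) (J : ι → Set A)
    (h : ∀ i ∈ s, IsEssentialRightIdeal (J i)) :
    IsEssentialRightIdeal (⋂ i ∈ s, J i) := by
  classical
  induction s using Finset.induction_on with
  | empty => simpa using essential_univ
  | @insert a s ha ih =>
    rw [Finset.set_biInter_insert]
    exact essential_inter (h a (Finset.mem_insert_self a s))
      (ih fun i hi => h i (Finset.mem_insert_of_mem hi))

lemma exists_max_rann (hacc : ACCRightAnnihilators A) :
    ∃ J : Set A, IsEssentialRightIdeal J ∧
      ∀ J' : Set A, IsEssentialRightIdeal J' → rann J' ⊆ rann J := by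
  by_contra hcon
  push_neg at hcon
  have step : ∀ p : {J : Set A // IsEssentialRightIdeal J},
      ∃ q : {J : Set A // IsEssentialRightIdeal J},
        rann p.1 ⊆ rann q.1 ∧ rann p.1 ≠ rann q.1 := by
    rintro ⟨J, hJ⟩
    obtain ⟨J', hJ', hnsub⟩ := hcon J hJ
    obtain ⟨c, hc1, hc2⟩ := Set.not_subset.mp hnsub
    refine ⟨⟨J' ∩ J, essential_inter hJ' hJ⟩, rann_antitone Set.inter_subset_right, ?_⟩
    intro heq
    have : c ∈ rann (J' ∩ J) := rann_antitone Set.inter_subset_left hc1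
    rw [← heq] at this
    exact hc2 this
  let F : {J : Set A // IsEssentialRightIdeal J} → {J : Set A // IsEssentialRightIdeal J} :=
    fun p => Classical.choose (step p)
  let seq : ℕ → {J : Set A // IsEssentialRightIdeal J} :=
    fun n => F^[n] ⟨Set.univ, essential_univ⟩
  have hseq : ∀ n, seq (n + 1) = F (seq n) := fun n => Function.iterate_succ_apply' F n _
  obtain ⟨N, hN⟩ := hacc (fun n => rann (seq n).1)
    (fun n => ⟨(seq n).1, rfl⟩)
    (fun n => by show rann (seq n).1 ⊆ rann (seq (n+1)).1; rw [hseq n]; exact (Classical.choose_spec (step (seq n))).1)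
  have h1 : rann (seq (N + 1)).1 = rann (seq N).1 := hN (N + 1) (Nat.le_succ N)
  have h2 := (Classical.choose_spec (step (seq N))).2
  rw [hseq N] at h1
  exact h2 h1.symm

end RingAux

section Main
variable {k H A : Type*} [Field k] [Ring H] [HopfAlgebra k H] [Ring A] [Algebra k A]

local notation "S" => HopfAlgebra.antipode (R := k) (A := H)

theorem memEH_rann_eq_zero_aux (act : H →ₗ[k] A →ₗ[k] A)
    (hact : IsModuleAlgebra k act) (hsp : IsS2Semiprime k act)
    (hacc : ACCRightAnnihilators A) :
    ∀ I : Set A, MemEH k act I → ∀ a : A, (∀ x ∈ I, x * a = 0) → a = 0 := by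
  intro I hI a ha
  classical
  obtain ⟨J₀, hJ₀ess, hJ₀max⟩ := exists_max_rann hacc
  -- `Z = rann J₀` absorbs the right annihilator of every essential right ideal
  have hZ_of_ess : ∀ K : Set A, IsEssentialRightIdeal K → ∀ b : A,
      (∀ x ∈ K, x * b = 0) → b ∈ rann J₀ := by
    intro K hK b hb
    have h1 : rann (K ∩ J₀) ⊆ rann J₀ := hJ₀max (K ∩ J₀) (essential_inter hK hJ₀ess)
    exact h1 (fun x hx => hb x hx.1)
  -- basic closure properties of Z
  have hZ_mulr : ∀ b ∈ rann J₀, ∀ c : A, b * c ∈ rann J₀ := by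
    intro b hb c x hx
    rw [← mul_assoc, hb x hx, zero_mul]
  have hZ_mull : ∀ b ∈ rann J₀, ∀ c : A, c * b ∈ rann J₀ := by
    intro b hb c x hx
    rw [← mul_assoc]
    exact hb (x * c) (hJ₀ess.1.2.2 x hx c)
  -- the stable ideal T
  set T : Set A := {b : A | ∀ g : H, act (S (S g)) b ∈ rann J₀} with hTdef
  have haT : a ∈ T := by
    intro g
    have hchoice : ∀ i : (ℛ k g).ι, ∃ J : Set A, IsEssentialRightIdeal J ∧
        ∀ x ∈ J, act (S ((ℛ k g).left i)) x ∈ I :=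
      fun i => hI.2 (S ((ℛ k g).left i)) ⟨(ℛ k g).left i, rfl⟩
    choose Jf hJf1 hJf2 using hchoice
    apply hZ_of_ess (⋂ i ∈ (ℛ k g).index, Jf i)
      (essential_biInter (ℛ k g).index Jf (fun i _ => hJf1 i))
    intro u hu
    rw [mul_act_sq hact g u a (ℛ k g)]
    apply Finset.sum_eq_zero
    intro i hi
    rw [ha (act (S ((ℛ k g).left i)) u) (hJf2 i u (Set.mem_iInter₂.mp hu i hi)), map_zero]
  -- closure properties of T
  have hT_zero : (0 : A) ∈ T := fun g => by
    rw [map_zero]; exact fun x _ => mul_zero x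
  have hT_add : ∀ x ∈ T, ∀ y ∈ T, x + y ∈ T := by
    intro x hx y hy g
    rw [map_add]
    intro z hz
    rw [mul_add, hx g z hz, hy g z hz, add_zero]
  have hT_neg : ∀ x ∈ T, -x ∈ T := by
    intro x hx g
    rw [map_neg]
    intro z hz
    rw [mul_neg, hx g z hz, neg_zero]
  have hT_mulr : ∀ x ∈ T, ∀ c : A, x * c ∈ T := by
    intro x hx c g
    rw [ma_repr hact (S (S g)) x c ((ℛ k g).anti.anti)]
    intro z hz
    rw [Finset.mul_sum]
    apply Finset.sum_eq_zero
    intro i _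
    have h1 : act (S (S ((ℛ k g).left i))) x ∈ rann J₀ := hx ((ℛ k g).left i)
    exact hZ_mulr _ h1 _ z hz
  have hT_mull : ∀ x ∈ T, ∀ c : A, c * x ∈ T := by
    intro x hx c g
    rw [ma_repr hact (S (S g)) c x ((ℛ k g).anti.anti)]
    intro z hz
    rw [Finset.mul_sum]
    apply Finset.sum_eq_zero
    intro i _
    have h1 : act (S (S ((ℛ k g).right i))) x ∈ rann J₀ := hx ((ℛ k g).right i)
    exact hZ_mull _ h1 _ z hz
  have hT_stable : ∀ h : H, ∀ x ∈ T, act (S (S h)) x ∈ T := by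
    intro h x hx g
    rw [← act_mul_apply hact, ← antipode_sq_mul]
    exact hx (g * h)
  have hTZ : ∀ x ∈ T, x ∈ rann J₀ := by
    intro x hx
    have h1 := hx 1
    rwa [my_antipode_one, my_antipode_one, act_one_apply hact] at h1
  -- the left annihilator of T
  set Lst : Set A := {x : A | ∀ t ∈ T, x * t = 0} with hLdef
  have hJL : J₀ ⊆ Lst := fun x hx t ht => hTZ t ht x hx
  have hL_rightIdeal : IsRightIdeal Lst := by
    refine ⟨fun t _ => zero_mul t, ?_, ?_⟩
    · intro x hx y hy t ht
      rw [add_mul, hx t ht, hy t ht, add_zero]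
    · intro x hx c t ht
      rw [mul_assoc]
      exact hx (c * t) (hT_mull t ht c)
  have hLess : IsEssentialRightIdeal Lst := essential_superset hJ₀ess hJL hL_rightIdeal
  -- R = T ∩ Lst is a square-zero S²-stable two-sided ideal
  have hR2s : IsTwoSidedIdealSet (T ∩ Lst) := by
    refine ⟨⟨hT_zero, fun t _ => zero_mul t⟩, ?_, ?_, ?_⟩
    · intro x hx y hy
      refine ⟨hT_add x hx.1 y hy.1, ?_⟩
      intro t ht
      rw [add_mul, hx.2 t ht, hy.2 t ht, add_zero]
    · intro x hx
      refine ⟨hT_neg x hx.1, ?_⟩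
      intro t ht
      rw [neg_mul, hx.2 t ht, neg_zero]
    · intro x hx c
      constructor
      · refine ⟨hT_mulr x hx.1 c, ?_⟩
        intro t ht
        rw [mul_assoc]
        exact hx.2 (c * t) (hT_mull t ht c)
      · refine ⟨hT_mull x hx.1 c, ?_⟩
        intro t ht
        rw [mul_assoc, hx.2 t ht, mul_zero]
  have hRstab : ∀ h : H, ∀ t ∈ T ∩ Lst, act (S (S h)) t ∈ T ∩ Lst := by
    rintro h t ⟨htT, htL⟩
    refine ⟨hT_stable h t htT, ?_⟩
    intro t' ht'
    rw [act_mul_right hact (S (S h)) t t' ((ℛ k h).anti.anti)]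
    apply Finset.sum_eq_zero
    intro i _
    have h1 : act (S (S (S ((ℛ k h).right i)))) t' ∈ T :=
      hT_stable (S ((ℛ k h).right i)) t' ht'
    have h2 : t * act (S (S (S ((ℛ k h).right i)))) t' = 0 := htL _ h1
    show act (S (S ((ℛ k h).left i))) (t * act (S (S (S ((ℛ k h).right i)))) t') = 0
    rw [h2, map_zero]
  have hRnil : IsNilpotentSet (T ∩ Lst) := by
    refine ⟨2, by norm_num, ?_⟩
    intro f hf
    have : (List.ofFn f).prod = f 0 * (f 1 * 1) := by
      simp [List.ofFn_succ]
    rw [this, mul_one]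
    exact (hf 0).2 (f 1) (hf 1).1
  have hR0 : T ∩ Lst = {0} := hsp (T ∩ Lst) hR2s hRstab hRnil
  -- conclusion
  by_contra hne
  have hTright : IsRightIdeal T := ⟨hT_zero, hT_add, hT_mulr⟩
  obtain ⟨x, hxL, hxT, hx0⟩ := hLess.2 T hTright ⟨a, haT, hne⟩
  apply hx0
  have : x ∈ T ∩ Lst := ⟨hxT, hxL⟩
  rwa [hR0, Set.mem_singleton_iff] at this

end Main

/-- If `A` is `S²(H)`-semiprime and satisfies ACC on right annihilators,
then `rann_A(I) = 0` for every right ideal `I ∈ E'_H`. -/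
theorem memEH_rann_eq_zero (k : Type*) [Field k] {H A : Type*} [Ring H]
    [HopfAlgebra k H] [Ring A] [Algebra k A] (act : H →ₗ[k] A →ₗ[k] A)
    (hact : IsModuleAlgebra k act) (hsp : IsS2Semiprime k act)
    (hacc : ACCRightAnnihilators A) :
    ∀ I : Set A, MemEH k act I → ∀ a : A, (∀ x ∈ I, x * a = 0) → a = 0 := by
  intro I hI a ha
  exact memEH_rann_eq_zero_aux act hact hsp hacc I hI a ha
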